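/- (Example 1: Cramér–Rao product and its minimum.) Let β > 0, Δ = {(x,y) ∈ ℝ² : x > 0}, and for integers n₁, n₂ ≥ 0 let ρ_{n₁,n₂} = u_{n₁,n₂}² where u_{n₁,n₂}(x,y) = √(2^{−2n₁−n₂−1}√β / (π (2n₁+1)! n₂!)) e^{−(√β/4)(x²+y²)} H_{2n₁+1}(β^{1/4} x/√2) H_{n₂}(β^{1/4} y/√2), with H_n the physicists' Hermite polynomial. Then the Cramér–Rao product satisfies F[ρ_{n₁,n₂}] · ⟨x²+y²⟩_{n₁,n₂} = 4(2n₁+n₂+2)², independently of β; in particular it is ≥ 16 for all n₁, n₂ ≥ 0, with equality exactly when n₁ = n₂ = 0, attained by the ground-state density ρ_{0,0}(x,y) = (β/π) x² e^{−(√β/2)(x²+y²)}. -/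

import Mathlib

open MeasureTheory Real

/-- The physicists' Hermite polynomial `H_n(t) = (-1)^n e^{t²} (d/dt)^n e^{-t²}`. -/
noncomputable def physHermite (n : ℕ) (t : ℝ) : ℝ :=
  (-1 : ℝ)^n * Real.exp (t^2) * iteratedDeriv n (fun s => Real.exp (-(s^2))) t

/-- The normalized eigenfunctions of the 2D harmonic oscillator on the half-plane
`x > 0` with Dirichlet boundary condition at `x = 0`. -/
noncomputable def uHalf (β : ℝ) (n₁ n₂ : ℕ) (p : ℝ × ℝ) : ℝ :=
  Real.sqrt ((2:ℝ) ^ (-2*(n₁:ℤ) - n₂ - 1) * Real.sqrt β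
      / (π * ((2*n₁+1).factorial : ℝ) * (n₂.factorial : ℝ)))
    * Real.exp (-(Real.sqrt β / 4) * (p.1^2 + p.2^2))
    * physHermite (2*n₁+1) (β ^ ((1:ℝ)/4) / Real.sqrt 2 * p.1)
    * physHermite n₂ (β ^ ((1:ℝ)/4) / Real.sqrt 2 * p.2)

/-- The Fisher information `F[u_{n₁,n₂}²] = 4∫_Δ |∇u_{n₁,n₂}|²` on the half-plane. -/
noncomputable def fisherHalf (β : ℝ) (n₁ n₂ : ℕ) : ℝ :=
  4 * ∫ p in {q : ℝ × ℝ | 0 < q.1},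
      ((deriv (fun s => uHalf β n₁ n₂ (s, p.2)) p.1)^2
        + (deriv (fun s => uHalf β n₁ n₂ (p.1, s)) p.2)^2)

/-- The variance `⟨x²+y²⟩_{n₁,n₂} = ∫_Δ (x²+y²) u_{n₁,n₂}²` on the half-plane. -/
noncomputable def varHalf (β : ℝ) (n₁ n₂ : ℕ) : ℝ :=
  ∫ p in {q : ℝ × ℝ | 0 < q.1}, (p.1^2 + p.2^2) * (uHalf β n₁ n₂ p)^2

/-!
Write `a = β^{1/4}/√2` and `φₙ(t) = e^{-(at)²/2} Hₙ(at)`. Then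
`u_{n₁,n₂}(x, y) = c · φ_{2n₁+1}(x) · φ_{n₂}(y)`, so by Fubini the Fisher information and the
second moment are sums of products of one-dimensional Gaussian moments of Hermite polynomials.
Integration by parts gives orthogonality, `∫ Hₘ Hₙ e^{-t²} = δₘₙ 2ⁿ n! √π`, and the recurrences
`X Hₙ = n Hₙ₋₁ + Hₙ₊₁/2`, `Hₙ' - X Hₙ = n Hₙ₋₁ - Hₙ₊₁/2` then give
`∫ t² Hₙ² e^{-t²} = ∫ (Hₙ' - t Hₙ)² e^{-t²} = (n + 1/2) 2ⁿ n! √π`. The `x`-factor has a parity,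
so each half-line integral is half the full one. Altogether
`F = 2√β (2n₁ + n₂ + 2)` and `⟨x² + y²⟩ = 2 (2n₁ + n₂ + 2) / √β`, and `β` cancels in the product.
-/

section Integration

open Set

lemma setIntegral_Ioi_eq_half_of_even {f : ℝ → ℝ} (hf : Integrable f) (heven : f.Even) :
    ∫ x in Ioi 0, f x = (∫ x, f x) / 2 := by
  have hIic : ∫ x in Iic 0, f x = ∫ x in Ioi 0, f x := by
    rw [← neg_zero, ← integral_comp_neg_Ioi]
    simp only [heven.eq, neg_zero]
  rw [← intervalIntegral.integral_Iic_add_Ioi hf.integrableOn hf.integrableOn, hIic]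
  ring

lemma setIntegral_halfPlane_mul_add_mul {f₁ g₁ f₂ g₂ : ℝ → ℝ}
    (hf₁ : IntegrableOn f₁ (Ioi 0)) (hg₁ : Integrable g₁)
    (hf₂ : IntegrableOn f₂ (Ioi 0)) (hg₂ : Integrable g₂) :
    ∫ p in {q : ℝ × ℝ | 0 < q.1}, (f₁ p.1 * g₁ p.2 + f₂ p.1 * g₂ p.2)
      = (∫ x in Ioi 0, f₁ x) * (∫ y, g₁ y) + (∫ x in Ioi 0, f₂ x) * ∫ y, g₂ y := by
  have hprod : {q : ℝ × ℝ | 0 < q.1} = Ioi 0 ×ˢ univ := by ext; simp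
  have hμ : (volume : Measure (ℝ × ℝ)).restrict {q | 0 < q.1}
      = (volume.restrict (Ioi 0)).prod volume := by
    rw [hprod, Measure.volume_eq_prod, ← Measure.prod_restrict, Measure.restrict_univ]
  rw [hμ, integral_add (hf₁.mul_prod hg₁) (hf₂.mul_prod hg₂), integral_prod_mul, integral_prod_mul]

end Integration

section Hermite

open Polynomial

noncomputable def physHermitePoly : ℕ → ℝ[X]
  | 0 => 1
  | n + 1 => 2 * X * physHermitePoly n - derivative (physHermitePoly n)

@[simp] lemma physHermitePoly_zero : physHermitePoly 0 = 1 := rfl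

lemma physHermitePoly_succ (n : ℕ) :
    physHermitePoly (n + 1) = 2 * X * physHermitePoly n - derivative (physHermitePoly n) := rfl

@[simp] lemma physHermitePoly_one : physHermitePoly 1 = 2 * X := by
  simp [physHermitePoly_succ]

lemma derivative_physHermitePoly_succ (n : ℕ) :
    derivative (physHermitePoly (n + 1)) = (2 * (n + 1) : ℝ) • physHermitePoly n := by
  induction n with
  | zero => simp [physHermitePoly_succ, smul_eq_C_mul, ← map_ofNat C 2]
  | succ n ih =>
    rw [physHermitePoly_succ (n + 1), derivative_sub, derivative_mul, ih, physHermitePoly_succ n]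
    simp only [smul_eq_C_mul, derivative_mul, derivative_ofNat, derivative_X,
      derivative_natCast, derivative_one, map_add, map_mul, map_ofNat, map_natCast, map_one]
    push_cast
    ring

-- At `n = 0` the truncated `n - 1` is harmless: its coefficient vanishes.
lemma derivative_physHermitePoly (n : ℕ) :
    derivative (physHermitePoly n) = (2 * n : ℝ) • physHermitePoly (n - 1) := by
  cases n with
  | zero => simp
  | succ n => rw [derivative_physHermitePoly_succ]; push_cast; rfl

lemma X_mul_physHermitePoly (n : ℕ) :
    X * physHermitePoly n
      = (n : ℝ) • physHermitePoly (n - 1) + (2⁻¹ : ℝ) • physHermitePoly (n + 1) := by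
  calc X * physHermitePoly n = (2⁻¹ : ℝ) • (2 * X * physHermitePoly n) := by
        rw [smul_eq_C_mul, ← mul_assoc, ← mul_assoc, ← map_ofNat C 2, ← C_mul]
        norm_num
    _ = _ := by rw [physHermitePoly_succ, derivative_physHermitePoly]; module

lemma derivative_physHermitePoly_sub_X_mul (n : ℕ) :
    derivative (physHermitePoly n) - X * physHermitePoly n
      = (n : ℝ) • physHermitePoly (n - 1) - (2⁻¹ : ℝ) • physHermitePoly (n + 1) := by
  rw [X_mul_physHermitePoly, derivative_physHermitePoly]
  module

lemma physHermitePoly_comp_neg_X (n : ℕ) :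
    (physHermitePoly n).comp (-X) = (-1 : ℝ) ^ n • physHermitePoly n := by
  induction n with
  | zero => simp
  | succ n ih =>
    have hd : (derivative (physHermitePoly n)).comp (-X)
        = -derivative ((physHermitePoly n).comp (-X)) := by
      simp [derivative_comp]
    rw [physHermitePoly_succ, sub_comp, mul_comp, mul_comp, hd, ih, derivative_smul, X_comp,
      ofNat_comp]
    simp only [smul_eq_C_mul, map_pow, map_neg, map_one]
    ring

lemma iteratedDeriv_exp_neg_sq (n : ℕ) :
    iteratedDeriv n (fun s : ℝ => exp (-s ^ 2))
      = fun t => (-1) ^ n * (physHermitePoly n).eval t * exp (-t ^ 2) := by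
  induction n with
  | zero => simp
  | succ n ih =>
    ext t
    have hexp : HasDerivAt (fun t : ℝ => exp (-t ^ 2)) (exp (-t ^ 2) * -(2 * t)) t := by
      simpa using (hasDerivAt_pow 2 t).neg.exp
    have h : HasDerivAt (fun t => (-1) ^ n * (physHermitePoly n).eval t * exp (-t ^ 2))
        ((-1) ^ n * (derivative (physHermitePoly n)).eval t * exp (-t ^ 2)
          + (-1) ^ n * (physHermitePoly n).eval t * (exp (-t ^ 2) * -(2 * t))) t :=
      (((physHermitePoly n).hasDerivAt t).const_mul _).mul hexp
    rw [iteratedDeriv_succ, ih, h.deriv, physHermitePoly_succ]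
    simp only [eval_sub, eval_mul, eval_ofNat, eval_X]
    ring

lemma physHermite_eq_eval (n : ℕ) (t : ℝ) : physHermite n t = (physHermitePoly n).eval t := by
  have hexp : exp (t ^ 2) * exp (-t ^ 2) = 1 := by rw [← exp_add, add_neg_cancel, exp_zero]
  have hsign : ((-1 : ℝ) ^ n) * (-1) ^ n = 1 := by rw [← mul_pow]; norm_num
  rw [physHermite, iteratedDeriv_exp_neg_sq]
  linear_combination (physHermitePoly n).eval t * (exp (t ^ 2) * exp (-t ^ 2) * hsign + hexp)

end Hermite

section GaussIntegral

open Polynomial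

lemma integrable_eval_mul_exp_neg_sq (P : ℝ[X]) :
    Integrable fun x : ℝ => P.eval x * exp (-x ^ 2) := by
  induction P using Polynomial.induction_on' with
  | add P Q hP hQ =>
    simp only [eval_add, add_mul]
    exact hP.add hQ
  | monomial n c =>
    have h := integrable_rpow_mul_exp_neg_mul_sq one_pos
      (lt_of_lt_of_le neg_one_lt_zero n.cast_nonneg)
    simpa only [eval_monomial, rpow_natCast, neg_one_mul, mul_assoc] using h.const_mul c

noncomputable def gaussIntegral : ℝ[X] →ₗ[ℝ] ℝ where
  toFun P := ∫ x, P.eval x * exp (-x ^ 2)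
  map_add' P Q := by
    simp only [eval_add, add_mul]
    exact integral_add (integrable_eval_mul_exp_neg_sq P) (integrable_eval_mul_exp_neg_sq Q)
  map_smul' c P := by
    simp only [eval_smul, smul_eq_mul, mul_assoc, RingHom.id_apply]
    exact integral_const_mul c _

lemma gaussIntegral_apply (P : ℝ[X]) :
    gaussIntegral P = ∫ x, P.eval x * exp (-x ^ 2) := rfl

lemma gaussIntegral_derivative_sub_two_X_mul (A : ℝ[X]) :
    gaussIntegral (derivative A - 2 * X * A) = 0 := by
  refine integral_eq_zero_of_hasDerivAt_of_integrable (fun x => ?_)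
    (integrable_eval_mul_exp_neg_sq _) (integrable_eval_mul_exp_neg_sq A)
  have hexp : HasDerivAt (fun t : ℝ => exp (-t ^ 2)) (exp (-x ^ 2) * -(2 * x)) x := by
    simpa using (hasDerivAt_pow 2 x).neg.exp
  refine ((A.hasDerivAt x).mul hexp).congr_deriv ?_
  simp only [eval_sub, eval_mul, eval_ofNat, eval_X]
  ring

end GaussIntegral

section Orthogonality

open Polynomial Nat

noncomputable def physHermiteNormSq (n : ℕ) : ℝ := 2 ^ n * n ! * √π

-- Integration by parts: `∫ (A' - 2XA) e^{-t²} = 0` with `A = H_a H_b`.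
lemma gaussIntegral_physHermitePoly_succ_mul (a b : ℕ) :
    gaussIntegral (physHermitePoly (a + 1) * physHermitePoly b)
      = gaussIntegral (physHermitePoly a * derivative (physHermitePoly b)) := by
  have h := gaussIntegral_derivative_sub_two_X_mul (physHermitePoly a * physHermitePoly b)
  rw [derivative_mul, physHermitePoly_succ] at *
  rw [← sub_eq_zero, ← map_sub, ← neg_eq_zero, ← map_neg]
  convert h using 2
  ring

lemma gaussIntegral_physHermitePoly_mul_of_lt {a b : ℕ} (h : b < a) :
    gaussIntegral (physHermitePoly a * physHermitePoly b) = 0 := by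
  induction b generalizing a with
  | zero =>
    obtain ⟨a, rfl⟩ := Nat.exists_eq_add_of_lt h
    rw [zero_add, gaussIntegral_physHermitePoly_succ_mul]
    simp
  | succ b ih =>
    obtain ⟨a, rfl⟩ := Nat.exists_eq_add_of_lt h
    rw [show b + 1 + a + 1 = (b + a + 1) + 1 by ring, gaussIntegral_physHermitePoly_succ_mul,
      derivative_physHermitePoly_succ, mul_smul_comm, map_smul, ih (by omega), smul_zero]

lemma gaussIntegral_physHermitePoly_mul_of_ne {a b : ℕ} (h : a ≠ b) :
    gaussIntegral (physHermitePoly a * physHermitePoly b) = 0 := by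
  rcases h.lt_or_gt with h | h
  · rw [mul_comm]; exact gaussIntegral_physHermitePoly_mul_of_lt h
  · exact gaussIntegral_physHermitePoly_mul_of_lt h

lemma gaussIntegral_physHermitePoly_mul_self (n : ℕ) :
    gaussIntegral (physHermitePoly n * physHermitePoly n) = physHermiteNormSq n := by
  induction n with
  | zero => simpa [gaussIntegral_apply, physHermiteNormSq] using integral_gaussian 1
  | succ n ih =>
    rw [gaussIntegral_physHermitePoly_succ_mul, derivative_physHermitePoly_succ, mul_smul_comm,
      map_smul, ih, smul_eq_mul, physHermiteNormSq, physHermiteNormSq, factorial_succ]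
    push_cast
    ring

lemma gaussIntegral_sq_smul_add_smul {i j : ℕ} (hij : i ≠ j) (u v : ℝ) :
    gaussIntegral ((u • physHermitePoly i + v • physHermitePoly j) ^ 2)
      = u ^ 2 * physHermiteNormSq i + v ^ 2 * physHermiteNormSq j := by
  have hexpand : (u • physHermitePoly i + v • physHermitePoly j) ^ 2
      = u ^ 2 • (physHermitePoly i * physHermitePoly i)
        + (u * v) • (physHermitePoly i * physHermitePoly j + physHermitePoly j * physHermitePoly i)
        + v ^ 2 • (physHermitePoly j * physHermitePoly j) := by
    simp only [smul_eq_C_mul, map_mul, map_pow]; ring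
  rw [hexpand, map_add, map_add, map_smul, map_smul, map_smul, map_add,
    gaussIntegral_physHermitePoly_mul_self, gaussIntegral_physHermitePoly_mul_self,
    gaussIntegral_physHermitePoly_mul_of_ne hij, gaussIntegral_physHermitePoly_mul_of_ne hij.symm]
  simp

lemma physHermiteNormSq_neighbours (n : ℕ) :
    (n : ℝ) ^ 2 * physHermiteNormSq (n - 1) + (2⁻¹ : ℝ) ^ 2 * physHermiteNormSq (n + 1)
      = (n + 2⁻¹) * physHermiteNormSq n := by
  cases n with
  | zero => norm_num [physHermiteNormSq]; ring
  | succ n =>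
    simp only [physHermiteNormSq, Nat.add_sub_cancel, factorial_succ]
    push_cast
    ring

lemma gaussIntegral_X_mul_physHermitePoly_sq (n : ℕ) :
    gaussIntegral ((X * physHermitePoly n) ^ 2) = (n + 2⁻¹) * physHermiteNormSq n := by
  rw [X_mul_physHermitePoly, gaussIntegral_sq_smul_add_smul (by omega),
    physHermiteNormSq_neighbours]

lemma gaussIntegral_derivative_physHermitePoly_sub_X_mul_sq (n : ℕ) :
    gaussIntegral ((derivative (physHermitePoly n) - X * physHermitePoly n) ^ 2)
      = (n + 2⁻¹) * physHermiteNormSq n := by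
  rw [derivative_physHermitePoly_sub_X_mul, sub_eq_add_neg, ← neg_smul,
    gaussIntegral_sq_smul_add_smul (by omega), neg_sq, physHermiteNormSq_neighbours]

end Orthogonality

section HermiteFunctions

open Polynomial

noncomputable def polyGaussian (a : ℝ) (Q : ℝ[X]) (x : ℝ) : ℝ :=
  Q.eval (a * x) * exp (-(a * x) ^ 2)

lemma integrable_polyGaussian {a : ℝ} (ha : a ≠ 0) (Q : ℝ[X]) : Integrable (polyGaussian a Q) :=
  (integrable_comp_mul_left_iff (fun y => Q.eval y * exp (-y ^ 2)) ha).2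
    (integrable_eval_mul_exp_neg_sq Q)

lemma integral_polyGaussian {a : ℝ} (ha : 0 < a) (Q : ℝ[X]) :
    ∫ x, polyGaussian a Q x = gaussIntegral Q / a := by
  simp only [polyGaussian]
  rw [Measure.integral_comp_mul_left (fun y => Q.eval y * exp (-y ^ 2)),
    abs_of_pos (inv_pos.2 ha), smul_eq_mul, gaussIntegral_apply, inv_mul_eq_div]

noncomputable def hermiteFun (a : ℝ) (n : ℕ) (x : ℝ) : ℝ :=
  exp (-(a * x) ^ 2 / 2) * (physHermitePoly n).eval (a * x)

variable {a : ℝ} {n : ℕ}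

lemma hermiteFun_sq (x : ℝ) :
    hermiteFun a n x ^ 2 = polyGaussian a (physHermitePoly n ^ 2) x := by
  rw [hermiteFun, polyGaussian, mul_pow, ← exp_nat_mul, eval_pow]
  ring_nf

lemma sq_mul_hermiteFun_sq (ha : a ≠ 0) (x : ℝ) :
    x ^ 2 * hermiteFun a n x ^ 2 = polyGaussian a ((X * physHermitePoly n) ^ 2) x / a ^ 2 := by
  rw [hermiteFun_sq, polyGaussian, polyGaussian, eval_pow, eval_pow, eval_mul, eval_X]
  field_simp

lemma hasDerivAt_hermiteFun (x : ℝ) :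
    HasDerivAt (hermiteFun a n)
      (a * (exp (-(a * x) ^ 2 / 2)
        * (derivative (physHermitePoly n) - X * physHermitePoly n).eval (a * x))) x := by
  have hlin : HasDerivAt (fun t => a * t) a x := by simpa using (hasDerivAt_id x).const_mul a
  have hexp := ((hlin.pow 2).neg.div_const 2).exp
  have hpoly := ((physHermitePoly n).hasDerivAt (a * x)).comp x hlin
  refine (hexp.mul hpoly).congr_deriv ?_
  simp only [Pi.pow_apply, Pi.neg_apply, Function.comp_apply, eval_sub, eval_mul, eval_X]
  ring

lemma deriv_hermiteFun_sq (x : ℝ) :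
    deriv (hermiteFun a n) x ^ 2
      = a ^ 2
        * polyGaussian a ((derivative (physHermitePoly n) - X * physHermitePoly n) ^ 2) x := by
  rw [(hasDerivAt_hermiteFun x).deriv, polyGaussian, eval_pow, mul_pow, mul_pow, ← exp_nat_mul]
  ring_nf

lemma hermiteFun_neg (x : ℝ) : hermiteFun a n (-x) = (-1) ^ n * hermiteFun a n x := by
  have h := congrArg (eval (a * x)) (physHermitePoly_comp_neg_X n)
  rw [eval_comp, eval_neg, eval_X, eval_smul, smul_eq_mul] at h
  rw [hermiteFun, hermiteFun, mul_neg, h, neg_sq]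
  ring

lemma deriv_hermiteFun_neg (x : ℝ) :
    deriv (hermiteFun a n) (-x) = -(-1) ^ n * deriv (hermiteFun a n) x := by
  have h := deriv_comp_neg (f := hermiteFun a n) (x := x)
  simp only [hermiteFun_neg, deriv_const_mul_field'] at h
  linarith

end HermiteFunctions

section Moments

open Set

variable {a : ℝ} (n : ℕ)

lemma integrable_hermiteFun_sq (ha : a ≠ 0) : Integrable fun x => hermiteFun a n x ^ 2 := by
  simpa only [hermiteFun_sq] using integrable_polyGaussian ha _

lemma integrable_sq_mul_hermiteFun_sq (ha : a ≠ 0) :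
    Integrable fun x => x ^ 2 * hermiteFun a n x ^ 2 := by
  simpa only [sq_mul_hermiteFun_sq ha] using (integrable_polyGaussian ha _).div_const _

lemma integrable_deriv_hermiteFun_sq (ha : a ≠ 0) :
    Integrable fun x => deriv (hermiteFun a n) x ^ 2 := by
  simpa only [deriv_hermiteFun_sq] using (integrable_polyGaussian ha _).const_mul _

lemma integral_hermiteFun_sq (ha : 0 < a) :
    ∫ x, hermiteFun a n x ^ 2 = physHermiteNormSq n / a := by
  simp only [hermiteFun_sq]
  rw [integral_polyGaussian ha, sq, gaussIntegral_physHermitePoly_mul_self]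

lemma integral_sq_mul_hermiteFun_sq (ha : 0 < a) :
    ∫ x, x ^ 2 * hermiteFun a n x ^ 2 = (n + 2⁻¹) * physHermiteNormSq n / a ^ 3 := by
  simp only [sq_mul_hermiteFun_sq ha.ne', integral_div, integral_polyGaussian ha,
    gaussIntegral_X_mul_physHermitePoly_sq]
  field_simp

lemma integral_deriv_hermiteFun_sq (ha : 0 < a) :
    ∫ x, deriv (hermiteFun a n) x ^ 2 = a * ((n + 2⁻¹) * physHermiteNormSq n) := by
  simp only [deriv_hermiteFun_sq, integral_const_mul, integral_polyGaussian ha,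
    gaussIntegral_derivative_physHermitePoly_sub_X_mul_sq]
  field_simp

lemma setIntegral_Ioi_hermiteFun_sq (ha : 0 < a) :
    ∫ x in Ioi 0, hermiteFun a n x ^ 2 = physHermiteNormSq n / (2 * a) := by
  rw [setIntegral_Ioi_eq_half_of_even (integrable_hermiteFun_sq n ha.ne'),
    integral_hermiteFun_sq n ha]
  · ring
  · intro x
    simp only [hermiteFun_neg, mul_pow, pow_right_comm _ n 2, neg_one_sq, one_pow, one_mul]

lemma setIntegral_Ioi_sq_mul_hermiteFun_sq (ha : 0 < a) :
    ∫ x in Ioi 0, x ^ 2 * hermiteFun a n x ^ 2 = (n + 2⁻¹) * physHermiteNormSq n / (2 * a ^ 3) := by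
  rw [setIntegral_Ioi_eq_half_of_even (integrable_sq_mul_hermiteFun_sq n ha.ne'),
    integral_sq_mul_hermiteFun_sq n ha]
  · ring
  · intro x
    simp only [hermiteFun_neg, neg_sq, mul_pow, pow_right_comm _ n 2, one_pow, one_mul]

lemma setIntegral_Ioi_deriv_hermiteFun_sq (ha : 0 < a) :
    ∫ x in Ioi 0, deriv (hermiteFun a n) x ^ 2 = a * ((n + 2⁻¹) * physHermiteNormSq n) / 2 := by
  rw [setIntegral_Ioi_eq_half_of_even (integrable_deriv_hermiteFun_sq n ha.ne'),
    integral_deriv_hermiteFun_sq n ha]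
  intro x
  simp only [deriv_hermiteFun_neg, neg_mul, neg_sq, mul_pow, pow_right_comm _ n 2, one_pow,
    one_mul]

end Moments

section HalfPlane

open Nat

noncomputable def hermiteScale (β : ℝ) : ℝ := β ^ (1 / 4 : ℝ) / √2

lemma hermiteScale_pos {β : ℝ} (hβ : 0 < β) : 0 < hermiteScale β := by
  unfold hermiteScale; positivity

lemma hermiteScale_sq {β : ℝ} (hβ : 0 ≤ β) : hermiteScale β ^ 2 = √β / 2 := by
  rw [hermiteScale, div_pow, sq_sqrt zero_le_two, ← rpow_natCast, ← rpow_mul hβ, sqrt_eq_rpow]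
  norm_num

noncomputable def uHalfNormSq (β : ℝ) (n₁ n₂ : ℕ) : ℝ :=
  (2 : ℝ) ^ (-2 * (n₁ : ℤ) - n₂ - 1) * √β / (π * ((2 * n₁ + 1) ! : ℝ) * (n₂ ! : ℝ))

lemma uHalfNormSq_nonneg (β : ℝ) (n₁ n₂ : ℕ) : 0 ≤ uHalfNormSq β n₁ n₂ := by
  unfold uHalfNormSq; have := pi_pos; positivity

lemma uHalfNormSq_mul_physHermiteNormSq (β : ℝ) (n₁ n₂ : ℕ) :
    uHalfNormSq β n₁ n₂ * (physHermiteNormSq (2 * n₁ + 1) * physHermiteNormSq n₂) = √β := by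
  have hpow : (2 : ℝ) ^ (-2 * (n₁ : ℤ) - n₂ - 1) * (2 ^ (2 * n₁ + 1) * 2 ^ n₂) = 1 := by
    rw [← pow_add, ← zpow_natCast, ← zpow_add₀ two_ne_zero]
    push_cast
    ring_nf
    exact zpow_zero 2
  have hfact : ((2 * n₁ + 1) ! * n₂ ! : ℝ) ≠ 0 := by positivity
  unfold uHalfNormSq physHermiteNormSq
  calc _ = (2 : ℝ) ^ (-2 * (n₁ : ℤ) - n₂ - 1) * (2 ^ (2 * n₁ + 1) * 2 ^ n₂) * √β * (√π * √π / π)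
        * (((2 * n₁ + 1) ! * n₂ ! : ℝ) / ((2 * n₁ + 1) ! * n₂ !)) := by ring
    _ = √β := by
      rw [hpow, mul_self_sqrt pi_pos.le, div_self pi_ne_zero, div_self hfact, one_mul, mul_one,
        mul_one]

lemma uHalf_eq_mul {β : ℝ} (hβ : 0 ≤ β) (n₁ n₂ : ℕ) (x y : ℝ) :
    uHalf β n₁ n₂ (x, y) = √(uHalfNormSq β n₁ n₂)
      * hermiteFun (hermiteScale β) (2 * n₁ + 1) x * hermiteFun (hermiteScale β) n₂ y := by
  have hexp : exp (-(√β / 4) * (x ^ 2 + y ^ 2))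
      = exp (-(hermiteScale β * x) ^ 2 / 2) * exp (-(hermiteScale β * y) ^ 2 / 2) := by
    rw [← exp_add, mul_pow, mul_pow, hermiteScale_sq hβ]
    ring_nf
  simp only [uHalf, hermiteFun, uHalfNormSq, hexp, physHermite_eq_eval, hermiteScale]
  ring

end HalfPlane

section CramerRao

open Polynomial

variable {β : ℝ}

lemma fisherHalf_eq (hβ : 0 < β) (n₁ n₂ : ℕ) :
    fisherHalf β n₁ n₂ = 2 * √β * (2 * n₁ + n₂ + 2) := by
  set a := hermiteScale β
  have ha : 0 < a := hermiteScale_pos hβ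
  set φ := hermiteFun a (2 * n₁ + 1)
  set ψ := hermiteFun a n₂
  have hgrad : ∀ p : ℝ × ℝ, (deriv (fun s => uHalf β n₁ n₂ (s, p.2)) p.1) ^ 2
      + (deriv (fun s => uHalf β n₁ n₂ (p.1, s)) p.2) ^ 2
      = uHalfNormSq β n₁ n₂ * (deriv φ p.1 ^ 2 * ψ p.2 ^ 2 + φ p.1 ^ 2 * deriv ψ p.2 ^ 2) := by
    intro p
    simp only [uHalf_eq_mul hβ.le, deriv_mul_const_field', deriv_const_mul_field']
    rw [mul_pow, mul_pow, mul_pow, mul_pow, sq_sqrt (uHalfNormSq_nonneg β n₁ n₂)]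
    ring
  simp only [fisherHalf, hgrad, integral_const_mul]
  rw [setIntegral_halfPlane_mul_add_mul (integrable_deriv_hermiteFun_sq _ ha.ne').integrableOn
      (integrable_hermiteFun_sq _ ha.ne') (integrable_hermiteFun_sq _ ha.ne').integrableOn
      (integrable_deriv_hermiteFun_sq _ ha.ne'),
    setIntegral_Ioi_deriv_hermiteFun_sq _ ha, integral_hermiteFun_sq _ ha,
    setIntegral_Ioi_hermiteFun_sq _ ha, integral_deriv_hermiteFun_sq _ ha,
    ← uHalfNormSq_mul_physHermiteNormSq β n₁ n₂]
  field_simp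
  push_cast
  ring

lemma varHalf_eq (hβ : 0 < β) (n₁ n₂ : ℕ) :
    varHalf β n₁ n₂ = 2 * (2 * n₁ + n₂ + 2) / √β := by
  set a := hermiteScale β
  have ha : 0 < a := hermiteScale_pos hβ
  set φ := hermiteFun a (2 * n₁ + 1)
  set ψ := hermiteFun a n₂
  have hmoment : ∀ p : ℝ × ℝ, (p.1 ^ 2 + p.2 ^ 2) * uHalf β n₁ n₂ p ^ 2
      = uHalfNormSq β n₁ n₂
        * ((p.1 ^ 2 * φ p.1 ^ 2) * ψ p.2 ^ 2 + φ p.1 ^ 2 * (p.2 ^ 2 * ψ p.2 ^ 2)) := by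
    rintro ⟨x, y⟩
    rw [uHalf_eq_mul hβ.le, mul_pow, mul_pow, sq_sqrt (uHalfNormSq_nonneg β n₁ n₂)]
    ring
  have ha4 : a ^ 4 = β / 4 := by
    rw [show a ^ 4 = (a ^ 2) ^ 2 by ring, hermiteScale_sq hβ.le, div_pow, sq_sqrt hβ.le]
    norm_num
  simp only [varHalf, hmoment, integral_const_mul]
  rw [setIntegral_halfPlane_mul_add_mul (integrable_sq_mul_hermiteFun_sq _ ha.ne').integrableOn
      (integrable_hermiteFun_sq _ ha.ne') (integrable_hermiteFun_sq _ ha.ne').integrableOn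
      (integrable_sq_mul_hermiteFun_sq _ ha.ne'),
    setIntegral_Ioi_sq_mul_hermiteFun_sq _ ha, integral_hermiteFun_sq _ ha,
    setIntegral_Ioi_hermiteFun_sq _ ha, integral_sq_mul_hermiteFun_sq _ ha]
  have hc := uHalfNormSq_mul_physHermiteNormSq β n₁ n₂
  have hsqrt : √β ^ 2 = β := sq_sqrt hβ.le
  field_simp
  push_cast
  linear_combination (2 * n₁ + n₂ + 2 : ℝ) * (2 * √β * hc - 8 * ha4 + 2 * hsqrt)

lemma uHalf_zero_zero_sq (hβ : 0 ≤ β) (p : ℝ × ℝ) :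
    uHalf β 0 0 p ^ 2 = β / π * p.1 ^ 2 * exp (-(√β / 2) * (p.1 ^ 2 + p.2 ^ 2)) := by
  obtain ⟨x, y⟩ := p
  have hc : uHalfNormSq β 0 0 = √β / (2 * π) := by
    simp only [uHalfNormSq, CharP.cast_eq_zero, mul_zero, sub_self, zero_sub, zpow_neg,
      zpow_one, zero_add, Nat.factorial_zero, Nat.factorial_one, Nat.cast_one, mul_one]
    ring
  have hexp : exp (-(√β / 2) * (x ^ 2 + y ^ 2))
      = exp (-(√β / 2 * x ^ 2)) * exp (-(√β / 2 * y ^ 2)) := by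
    rw [← exp_add]; ring_nf
  rw [uHalf_eq_mul hβ, mul_pow, mul_pow, sq_sqrt (uHalfNormSq_nonneg β 0 0), hc, hermiteFun_sq,
    hermiteFun_sq, hexp]
  simp only [polyGaussian, mul_zero, zero_add, physHermitePoly_one, physHermitePoly_zero, eval_pow,
    eval_mul, eval_ofNat, eval_X, eval_one, one_pow, one_mul, mul_pow, hermiteScale_sq hβ]
  field_simp
  rw [sq_sqrt hβ]
  ring

end CramerRao

lemma four_mul_sq_eq_sixteen_iff (n₁ n₂ : ℕ) :
    4 * (2 * (n₁ : ℝ) + n₂ + 2) ^ 2 = 16 ↔ n₁ = 0 ∧ n₂ = 0 := by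
  constructor
  · intro h
    have hsum : ((2 * n₁ + n₂ : ℕ) : ℝ) = 0 := by
      push_cast
      nlinarith [n₁.cast_nonneg (α := ℝ), n₂.cast_nonneg (α := ℝ)]
    have := Nat.cast_eq_zero.1 hsum
    omega
  · rintro ⟨rfl, rfl⟩
    norm_num

/-- **Example 1: Cramér–Rao product and its minimum.** For `β > 0` and the half-plane
`Δ = {(x,y) : x > 0}`, the Cramér–Rao product satisfies
`F[ρ_{n₁,n₂}] ⟨x²+y²⟩_{n₁,n₂} = 4(2n₁+n₂+2)²` (independently of `β`); in particular it
is `≥ 16`, with equality exactly when `n₁ = n₂ = 0`, attained by the ground-state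
density `ρ_{0,0}(x,y) = (β/π) x² e^{-(√β/2)(x²+y²)}`. -/
theorem halfplane_cramer_rao_product
    (β : ℝ) (hβ : 0 < β) (n₁ n₂ : ℕ) :
    fisherHalf β n₁ n₂ * varHalf β n₁ n₂ = 4 * (2*(n₁:ℝ) + n₂ + 2)^2
    ∧ 16 ≤ fisherHalf β n₁ n₂ * varHalf β n₁ n₂
    ∧ (fisherHalf β n₁ n₂ * varHalf β n₁ n₂ = 16 ↔ n₁ = 0 ∧ n₂ = 0)
    ∧ (∀ p : ℝ × ℝ, (uHalf β 0 0 p)^2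
        = (β / π) * p.1^2 * Real.exp (-(Real.sqrt β / 2) * (p.1^2 + p.2^2))) := by
  have hprod : fisherHalf β n₁ n₂ * varHalf β n₁ n₂ = 4 * (2 * (n₁ : ℝ) + n₂ + 2) ^ 2 := by
    rw [fisherHalf_eq hβ, varHalf_eq hβ]
    field_simp [(sqrt_pos.2 hβ).ne']
    ring
  refine ⟨hprod, ?_, hprod ▸ four_mul_sq_eq_sixteen_iff n₁ n₂, uHalf_zero_zero_sq hβ.le⟩
  rw [hprod]
  nlinarith [n₁.cast_nonneg (α := ℝ), n₂.cast_nonneg (α := ℝ)]
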